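/- arXiv:2111.11206 — 3 statements merged into one kernel-verified Lean document; each statement's English description precedes it below -/
import Mathlib

section
/- In a semi-vector space V over ℝ≥0, if α, β are nonnegative reals, v ∈ V is nonzero, and α·v = β·v, then α = β. -/
open NNReal

theorem stmt1 (V : Type*) [AddCancelCommMonoid V] [Module ℝ≥0 V]
    (v : V) (hv : v ≠ 0) (α β : ℝ≥0) (h : α • v = β • v) : α = β := by
  by_contra hne
  wlog hlt : α < β generalizing α β
  · exact this β α h.symm (Ne.symm hne) (lt_of_le_of_ne (not_lt.mp hlt) (Ne.symm hne))
  obtain ⟨c, hc, rfl⟩ : ∃ c : ℝ≥0, c ≠ 0 ∧ β = α + c := by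
    refine ⟨β - α, ?_, ?_⟩
    · exact fun h0 => hne (le_antisymm hlt.le (tsub_eq_zero_iff_le.mp h0))
    · rw [add_comm, tsub_add_cancel_of_le hlt.le]
  rw [add_smul] at h
  have hcz : c • v = 0 := by
    have := add_right_cancel (a := c • v) (b := α • v) (c := 0)
    nth_rewrite 1 [← add_zero (α • v)] at h
    exact (add_left_cancel h.symm)
  apply hv
  calc v = (c⁻¹ * c) • v := by rw [inv_mul_cancel₀ hc, one_smul]
    _ = c⁻¹ • (c • v) := by rw [mul_smul]
    _ = 0 := by rw [hcz, smul_zero]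
end

section
/- Every semi-free semi-vector space over ℝ≥0 of semi-dimension n is isomorphic (via a bijective semi-linear map) to (ℝ≥0)ⁿ with coordinatewise operations. -/
open NNReal

theorem stmt7 (V : Type*) [AddCancelCommMonoid V] [Module ℝ≥0 V]
    (n : ℕ) (b : Fin n → V)
    (hbasis : ∀ v : V, ∃! c : Fin n → ℝ≥0, v = ∑ i, c i • b i) :
    ∃ T : V → (Fin n → ℝ≥0), Function.Bijective T ∧
      (∀ u v : V, T (u + v) = T u + T v) ∧
      (∀ (c : ℝ≥0) (v : V), T (c • v) = c • T v) := by
  choose T hT huniq using hbasis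
  refine ⟨T, ⟨fun u v h => ?_, fun c => ⟨∑ i, c i • b i, (huniq _ c rfl).symm⟩⟩,
    fun u v => ?_, fun c v => ?_⟩
  · rw [hT u, hT v, h]
  · refine (huniq (u + v) (T u + T v) ?_).symm
    calc u + v = (∑ i, T u i • b i) + ∑ i, T v i • b i := by rw [← hT u, ← hT v]
    _ = ∑ i, (T u i • b i + T v i • b i) := (Finset.sum_add_distrib).symm
    _ = ∑ i, (T u + T v) i • b i := by simp [add_smul]
  · refine (huniq (c • v) (c • T v) ?_).symm
    calc c • v = c • ∑ i, T v i • b i := by rw [← hT v]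
    _ = ∑ i, c • (T v i • b i) := Finset.smul_sum
    _ = ∑ i, (c • T v) i • b i := by simp [smul_smul]
end

section
/- Let A be a simple Lie semi-algebra over a semi-field K. Then the bracket is identically zero: [u, v] = 0 for all u, v ∈ A. -/
open NNReal

theorem stmt19 (K : Type*) [Semifield K] (A : Type*)
    [AddCancelCommMonoid A] [Module K A]
    (bracket : A → A → A)
    (haddl : ∀ u v w : A, bracket (u + v) w = bracket u w + bracket v w)
    (haddr : ∀ u v w : A, bracket u (v + w) = bracket u v + bracket u w)
    (hsmull : ∀ (c : K) (u v : A), bracket (c • u) v = c • bracket u v)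
    (hsmulr : ∀ (c : K) (u v : A), bracket u (c • v) = c • bracket u v)
    (halt : ∀ v : A, bracket v v = 0)
    (hjacobi : ∀ u v w : A,
      bracket u (bracket v w) + bracket w (bracket u v) + bracket v (bracket w u) = 0)
    (hsimple : ∀ a : A, (∃ b : A, a + b = 0) → a = 0) :
    ∀ u v : A, bracket u v = 0 := by
  intro u v
  apply hsimple
  refine ⟨bracket v u, ?_⟩
  have h := halt (u + v)
  rw [haddl, haddr, haddr, halt, halt] at h
  -- h : bracket u v + 0 + (bracket v u + 0) = 0
  simpa using h
end
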